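/- arXiv:1709.10119 — 9 statements merged into one kernel-verified Lean document; each statement's English description precedes it below -/
import Mathlib

section
/- For every r > 0 and λ ∈ (0,1), the function f is differentiable at every point p₀ of the open interval (0,1). -/
/-!
The series defining `f` is the restriction to the real axis of the complex series
`∑ gℂ i z`, whose terms are holomorphic on the half-plane `0 < re z`, since there each factor
`r + j z` has positive real part. On `{a < re z, ‖z‖ < R}` each factor has modulus at least
`j a`, so `‖gℂ i z‖ ≤ R (r (1 + |λ| R) / a)^i / i!`. These bounds are summable, so the sum
is holomorphic by Weierstrass' theorem, and its real part `f` is real-differentiable.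
-/

open scoped BigOperators

/-- `g r lam i x = x · r^i (1−λx)^i / ∏_{j=1}^i (r + j·x)`; for `i = 0` this is `x`. -/
noncomputable def g (r lam : ℝ) (i : ℕ) (x : ℝ) : ℝ :=
  x * r ^ i * (1 - lam * x) ^ i / ∏ j ∈ Finset.Icc 1 i, (r + (j : ℝ) * x)

/-- `f r lam x = Σ_{i=0}^∞ g_i(x)`. -/
noncomputable def f (r lam : ℝ) (x : ℝ) : ℝ := ∑' i : ℕ, g r lam i x

open Complex Finset Nat

noncomputable def gℂ (r lam : ℝ) (i : ℕ) (z : ℂ) : ℂ :=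
  z * (r : ℂ) ^ i * (1 - (lam : ℂ) * z) ^ i / ∏ j ∈ Icc 1 i, ((r : ℂ) + j * z)

noncomputable def fℂ (r lam : ℝ) (z : ℂ) : ℂ := ∑' i, gℂ r lam i z

lemma gℂ_ofReal (r lam : ℝ) (i : ℕ) (x : ℝ) : gℂ r lam i x = g r lam i x := by
  simp [gℂ, g]

lemma f_eq_re_fℂ (r lam : ℝ) : f r lam = fun x : ℝ => (fℂ r lam x).re := by
  ext x
  simp_rw [fℂ, gℂ_ofReal, ← ofReal_tsum, ofReal_re, f]

lemma prod_Icc_natCast_mul {R : Type*} [CommSemiring R] (a : R) (i : ℕ) : ∏ j ∈ Icc 1 i, ((j : R) * a) = i ! * a ^ i := by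
  rw [prod_mul_distrib, prod_const, Nat.card_Icc, Nat.add_sub_cancel, ← Ico_add_one_right_eq_Icc,
    ← prod_natCast, prod_Ico_id_eq_factorial]

lemma factorial_mul_pow_le_norm_prod {r a : ℝ} {z : ℂ} (hr : 0 ≤ r) (ha : 0 ≤ a)
    (haz : a ≤ z.re) (i : ℕ) : i ! * a ^ i ≤ ‖∏ j ∈ Icc 1 i, ((r : ℂ) + j * z)‖ := by
  rw [norm_prod, ← prod_Icc_natCast_mul]
  refine prod_le_prod (fun j _ => by positivity) fun j _ => ?_
  calc (j : ℝ) * a ≤ r + j * z.re := by nlinarith [(j.cast_nonneg : (0 : ℝ) ≤ j)]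
    _ = ((r : ℂ) + j * z).re := by simp
    _ ≤ _ := re_le_norm _

lemma prod_ne_zero_of_re_pos {r : ℝ} {z : ℂ} (hr : 0 ≤ r) (hz : 0 < z.re) (i : ℕ) :
    ∏ j ∈ Icc 1 i, ((r : ℂ) + j * z) ≠ 0 :=
  norm_pos_iff.mp <| (by positivity : (0 : ℝ) < i ! * z.re ^ i).trans_le
    (factorial_mul_pow_le_norm_prod hr hz.le le_rfl i)

lemma norm_gℂ_le {r lam a R : ℝ} {z : ℂ} (hr : 0 ≤ r) (ha : 0 < a) (haz : a ≤ z.re)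
    (hzR : ‖z‖ ≤ R) (i : ℕ) :
    ‖gℂ r lam i z‖ ≤ R * ((r * (1 + |lam| * R) / a) ^ i / i !) := by
  have h1 : ‖1 - (lam : ℂ) * z‖ ≤ 1 + |lam| * R := by
    calc ‖1 - (lam : ℂ) * z‖ ≤ 1 + |lam| * ‖z‖ := by
          simpa [norm_mul] using norm_sub_le (1 : ℂ) (lam * z)
      _ ≤ 1 + |lam| * R := by gcongr
  have hnum : ‖z * (r : ℂ) ^ i * (1 - (lam : ℂ) * z) ^ i‖ ≤ R * (r * (1 + |lam| * R)) ^ i := by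
    rw [norm_mul, norm_mul, norm_pow, norm_pow, norm_real, Real.norm_of_nonneg hr, mul_pow,
      ← mul_assoc]
    gcongr
    exact mul_nonneg ((norm_nonneg z).trans hzR) (by positivity)
  calc ‖gℂ r lam i z‖ ≤ R * (r * (1 + |lam| * R)) ^ i / (i ! * a ^ i) := by
        rw [gℂ, norm_div]
        exact div_le_div₀ ((norm_nonneg _).trans hnum) hnum (by positivity)
          (factorial_mul_pow_le_norm_prod hr ha.le haz i)
    _ = R * ((r * (1 + |lam| * R) / a) ^ i / i !) := by
        rw [div_pow]; field_simp

lemma differentiableOn_gℂ {r : ℝ} (lam : ℝ) (hr : 0 ≤ r) (i : ℕ) :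
    DifferentiableOn ℂ (gℂ r lam i) {z | 0 < z.re} :=
  DifferentiableOn.div (by fun_prop) (DifferentiableOn.fun_finsetProd fun _ _ => by fun_prop)
    fun _ hz => prod_ne_zero_of_re_pos hr hz i

lemma differentiableAt_fℂ {r : ℝ} (lam : ℝ) (hr : 0 ≤ r) {z : ℂ} (hz : 0 < z.re) :
    DifferentiableAt ℂ (fℂ r lam) z := by
  set U := {w : ℂ | z.re / 2 < w.re} ∩ Metric.ball 0 (‖z‖ + 1)
  have hU : IsOpen U :=
    (isOpen_lt continuous_const continuous_re).inter Metric.isOpen_ball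
  have hzU : z ∈ U := ⟨show z.re / 2 < z.re by linarith, by simp⟩
  have hdiff : DifferentiableOn ℂ (fℂ r lam) U :=
    differentiableOn_tsum_of_summable_norm
      ((Real.summable_pow_div_factorial _).mul_left (‖z‖ + 1))
      (fun i => (differentiableOn_gℂ lam hr i).mono fun w hw => (half_pos hz).trans hw.1) hU
      fun i w hw => norm_gℂ_le hr (half_pos hz) hw.1.le (mem_ball_zero_iff.mp hw.2).le i
  exact hdiff.differentiableAt (hU.mem_nhds hzU)

theorem stmt1_general (r lam : ℝ) (hr : 0 < r) :
    ∀ p₀ ∈ Set.Ioo (0:ℝ) 1, DifferentiableAt ℝ (f r lam) p₀ := by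
  rintro p₀ ⟨hp₀, -⟩
  rw [f_eq_re_fℂ]
  exact (differentiableAt_fℂ lam hr.le (by simpa using hp₀)).hasDerivAt.real_of_complex
    |>.differentiableAt

theorem stmt1 (r lam : ℝ) (hr : 0 < r) (hlam : lam ∈ Set.Ioo (0:ℝ) 1) :
    ∀ p₀ ∈ Set.Ioo (0:ℝ) 1, DifferentiableAt ℝ (f r lam) p₀ :=
  stmt1_general r lam hr
end

section
/- For every r > 0 and λ ∈ (0,1), the function f is strictly monotonically increasing on the open interval (0,1): for all 0 < x < y < 1, f(x) < f(y). -/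
/-!
Write `g_i = z ∏_{j ≤ i} ρ_j` with `ρ_j = r (1 - λz) / (r + jz)` and let `ψ_j = -(log ρ_j)'`,
which is nonnegative and increasing in `j`. Then `f' = f / z - ∑_i g_i ∑_{j ≤ i} ψ_j`, and
`g_i ∑_{j ≤ i} ψ_j ≤ i g_i ψ_i = i (g_{i-1} - g_i) r / (z (r + iz))`
`≤ i (g_{i-1} - g_i) r / (z (r + z))`.
By Abel summation `∑_i i (g_{i-1} - g_i) = f`, so the negative part of `f'` is at most
`r f / (z (r + z)) < f / z`. Termwise differentiation is justified by the geometric domination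
`g_i(z) ≤ z (r / (r + a))^i` for `z ≥ a > 0`.
-/

open scoped BigOperators

open Finset

/-- `ratioDecay r lam j z = -(d/dz) log (r (1 - lam z) / (r + j z))`, the logarithmic decay rate
in `z` of the ratio `g_j / g_{j-1}`. -/
noncomputable def ratioDecay (r lam j z : ℝ) : ℝ :=
  (j + lam * r) / ((1 - lam * z) * (r + j * z))

noncomputable def gDeriv (r lam : ℝ) (i : ℕ) (z : ℝ) : ℝ :=
  g r lam i z * (1 / z - ∑ j ∈ Icc 1 i, ratioDecay r lam j z)

lemma hasSum_succ_mul_sub {u : ℕ → ℝ} (hu : Summable u)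
    (hnu : Summable fun k : ℕ => (k : ℝ) * u k) :
    HasSum (fun k : ℕ => ((k : ℝ) + 1) * (u k - u (k + 1))) (∑' k, u k) := by
  set v : ℕ → ℝ := fun k => ((k : ℝ) + 1) * u k
  have hv : Summable v := by simpa only [v, add_mul, one_mul] using hnu.add hu
  have hv' : Summable fun k => v (k + 1) := (summable_nat_add_iff 1).2 hv
  have hu' : Summable fun k => u (k + 1) := (summable_nat_add_iff 1).2 hu
  have hsplit : (fun k : ℕ => ((k : ℝ) + 1) * (u k - u (k + 1)))
      = fun k => (v k - v (k + 1)) + u (k + 1) := by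
    ext k; simp only [v]; push_cast; ring
  rw [hsplit]
  refine ((hv.sub hv').add hu').hasSum_iff.2 ?_
  rw [(hv.sub hv').tsum_add hu', hv.tsum_sub hv', hv.tsum_eq_zero_add, hu.tsum_eq_zero_add]
  simp [v]

section

variable {r lam z : ℝ}

lemma g_zero (r lam z : ℝ) : g r lam 0 z = z := by simp [g]

lemma g_succ (r lam : ℝ) (i : ℕ) (z : ℝ) :
    g r lam (i + 1) z = g r lam i z * (r * (1 - lam * z) / (r + ((i : ℝ) + 1) * z)) := by
  unfold g
  rw [prod_Icc_succ_top (by omega : 1 ≤ i + 1), div_mul_div_comm]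
  push_cast
  ring_nf

lemma g_pos (hr : 0 < r) (hz : 0 < z) (hc : 0 < 1 - lam * z) (i : ℕ) : 0 < g r lam i z := by
  induction i with
  | zero => rwa [g_zero]
  | succ k ih => rw [g_succ]; positivity

lemma g_le_geometric {a : ℝ} (hr : 0 < r) (hlam : 0 ≤ lam) (ha : 0 < a) (haz : a ≤ z)
    (hc : 0 < 1 - lam * z) (i : ℕ) : g r lam i z ≤ z * (r / (r + a)) ^ i := by
  have hz : 0 < z := ha.trans_le haz
  induction i with
  | zero => rw [g_zero, pow_zero, mul_one]
  | succ k ih =>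
    have hratio : r * (1 - lam * z) / (r + ((k : ℝ) + 1) * z) ≤ r / (r + a) := by
      apply div_le_div₀ hr.le (by nlinarith [mul_nonneg hlam hz.le]) (by positivity)
      nlinarith [mul_le_mul_of_nonneg_left haz (by positivity : (0 : ℝ) ≤ (k : ℝ) + 1)]
    rw [g_succ, pow_succ, ← mul_assoc]
    exact mul_le_mul ih hratio (by positivity) (by positivity)

lemma summable_g (hr : 0 < r) (hlam : 0 ≤ lam) (hz : 0 < z) (hc : 0 < 1 - lam * z) :
    Summable fun i => g r lam i z := by
  have hq : r / (r + z) < 1 := by rw [div_lt_one (by positivity)]; linarith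
  exact .of_nonneg_of_le (fun i => (g_pos hr hz hc i).le) (g_le_geometric hr hlam hz le_rfl hc)
    ((summable_geometric_of_lt_one (by positivity) hq).mul_left z)

lemma summable_natCast_mul_g (hr : 0 < r) (hlam : 0 ≤ lam) (hz : 0 < z)
    (hc : 0 < 1 - lam * z) : Summable fun i : ℕ => (i : ℝ) * g r lam i z := by
  have hq : ‖r / (r + z)‖ < 1 := by
    rw [Real.norm_eq_abs, abs_of_pos (by positivity), div_lt_one (by positivity)]; linarith
  refine .of_nonneg_of_le (fun i => mul_nonneg i.cast_nonneg (g_pos hr hz hc i).le)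
    (fun i => ?_)
    (Summable.mul_left z (by simpa using summable_pow_mul_geometric_of_norm_lt_one 1 hq))
  calc (i : ℝ) * g r lam i z ≤ i * (z * (r / (r + z)) ^ i) :=
        mul_le_mul_of_nonneg_left (g_le_geometric hr hlam hz le_rfl hc i) i.cast_nonneg
    _ = z * ((i : ℝ) * (r / (r + z)) ^ i) := by ring

lemma hasDerivAt_ratio {j : ℝ} (hc : 1 - lam * z ≠ 0) (hd : r + j * z ≠ 0) :
    HasDerivAt (fun w => r * (1 - lam * w) / (r + j * w))
      (-(r * (1 - lam * z) / (r + j * z) * ratioDecay r lam j z)) z := by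
  have hnum : HasDerivAt (fun w => r * (1 - lam * w)) (-(r * lam)) z := by
    simpa using (((hasDerivAt_id z).const_mul lam).const_sub 1).const_mul r
  have hden : HasDerivAt (fun w => r + j * w) j z := by
    simpa using ((hasDerivAt_id z).const_mul j).const_add r
  refine (hnum.div hden hd).congr_deriv ?_
  unfold ratioDecay
  field_simp
  ring

lemma hasDerivAt_g (hr : 0 < r) (hz : 0 < z) (hc : 0 < 1 - lam * z) (i : ℕ) :
    HasDerivAt (g r lam i) (gDeriv r lam i z) z := by
  induction i with
  | zero =>
    have hD : gDeriv r lam 0 z = 1 := by simp [gDeriv, g_zero, hz.ne']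
    rw [funext (g_zero r lam), hD]
    exact hasDerivAt_id z
  | succ k ih =>
    have hd : 0 < r + ((k : ℝ) + 1) * z := by positivity
    rw [funext (g_succ r lam k)]
    refine (ih.mul (hasDerivAt_ratio hc.ne' hd.ne')).congr_deriv ?_
    rw [gDeriv, gDeriv, g_succ, sum_Icc_succ_top (by omega : 1 ≤ k + 1)]
    push_cast
    ring

lemma ratioDecay_nonneg {j : ℝ} (hr : 0 < r) (hlam : 0 ≤ lam) (hz : 0 ≤ z)
    (hc : 0 < 1 - lam * z) (hj : 0 ≤ j) : 0 ≤ ratioDecay r lam j z := by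
  unfold ratioDecay; positivity

lemma ratioDecay_mono {j k : ℝ} (hr : 0 < r) (hz : 0 ≤ z) (hc : 0 < 1 - lam * z) (hj : 0 ≤ j)
    (hjk : j ≤ k) : ratioDecay r lam j z ≤ ratioDecay r lam k z := by
  unfold ratioDecay
  have hk : 0 ≤ k := hj.trans hjk
  rw [div_le_div_iff₀ (by positivity) (by positivity)]
  nlinarith [mul_nonneg (mul_nonneg hr.le (sub_nonneg.2 hjk)) hc.le]

lemma sum_ratioDecay_le (hr : 0 < r) (hz : 0 ≤ z) (hc : 0 < 1 - lam * z) (i : ℕ) :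
    ∑ j ∈ Icc 1 i, ratioDecay r lam j z ≤ i * ratioDecay r lam i z := by
  calc ∑ j ∈ Icc 1 i, ratioDecay r lam j z ≤ #(Icc 1 i) • ratioDecay r lam i z :=
        sum_le_card_nsmul _ _ _ fun j hj =>
          ratioDecay_mono hr hz hc j.cast_nonneg (by exact_mod_cast (mem_Icc.1 hj).2)
    _ = i * ratioDecay r lam i z := by simp [nsmul_eq_mul]

lemma g_succ_mul_ratioDecay (hr : 0 < r) (hz : 0 < z) (hc : 0 < 1 - lam * z) (k : ℕ) :
    g r lam (k + 1) z * ratioDecay r lam ((k : ℝ) + 1) z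
      = r / (z * (r + ((k : ℝ) + 1) * z)) * (g r lam k z - g r lam (k + 1) z) := by
  have hd : 0 < r + ((k : ℝ) + 1) * z := by positivity
  rw [g_succ, ratioDecay]
  field_simp
  ring

lemma g_mul_sum_ratioDecay_succ_le (hr : 0 < r) (hlam : 0 ≤ lam) (hz : 0 < z)
    (hc : 0 < 1 - lam * z) (k : ℕ) :
    g r lam (k + 1) z * ∑ j ∈ Icc 1 (k + 1), ratioDecay r lam j z
      ≤ r / (z * (r + z)) * (((k : ℝ) + 1) * (g r lam k z - g r lam (k + 1) z)) := by
  have hψ := ratioDecay_nonneg hr hlam hz.le hc (by positivity : (0 : ℝ) ≤ (k : ℝ) + 1)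
  have hdiff : 0 ≤ g r lam k z - g r lam (k + 1) z := by
    have h := g_succ_mul_ratioDecay hr hz hc k
    have := mul_nonneg (g_pos hr hz hc (k + 1)).le hψ
    exact nonneg_of_mul_nonneg_right (h ▸ this) (by positivity)
  calc g r lam (k + 1) z * ∑ j ∈ Icc 1 (k + 1), ratioDecay r lam j z
      ≤ g r lam (k + 1) z * (((k : ℝ) + 1) * ratioDecay r lam ((k : ℝ) + 1) z) := by
        gcongr
        · exact (g_pos hr hz hc _).le
        · exact_mod_cast sum_ratioDecay_le hr hz.le hc (k + 1)
    _ = ((k : ℝ) + 1) *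
          (r / (z * (r + ((k : ℝ) + 1) * z)) * (g r lam k z - g r lam (k + 1) z)) := by
        rw [← g_succ_mul_ratioDecay hr hz hc]; ring
    _ ≤ ((k : ℝ) + 1) * (r / (z * (r + z)) * (g r lam k z - g r lam (k + 1) z)) := by
        gcongr
        nlinarith [mul_nonneg (k.cast_nonneg : (0 : ℝ) ≤ k) hz.le]
    _ = r / (z * (r + z)) * (((k : ℝ) + 1) * (g r lam k z - g r lam (k + 1) z)) := by ring

lemma hasSum_succ_mul_sub_g (hr : 0 < r) (hlam : 0 ≤ lam) (hz : 0 < z)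
    (hc : 0 < 1 - lam * z) :
    HasSum (fun k : ℕ => ((k : ℝ) + 1) * (g r lam k z - g r lam (k + 1) z)) (f r lam z) :=
  hasSum_succ_mul_sub (summable_g hr hlam hz hc) (summable_natCast_mul_g hr hlam hz hc)

lemma summable_g_mul_sum_ratioDecay (hr : 0 < r) (hlam : 0 ≤ lam) (hz : 0 < z)
    (hc : 0 < 1 - lam * z) :
    Summable fun i => g r lam i z * ∑ j ∈ Icc 1 i, ratioDecay r lam j z := by
  refine (summable_nat_add_iff 1).1 <| .of_nonneg_of_le (fun i => ?_)
    (g_mul_sum_ratioDecay_succ_le hr hlam hz hc)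
    ((hasSum_succ_mul_sub_g hr hlam hz hc).summable.mul_left _)
  exact mul_nonneg (g_pos hr hz hc _).le
    (sum_nonneg fun j _ => ratioDecay_nonneg hr hlam hz.le hc j.cast_nonneg)

lemma tsum_g_mul_sum_ratioDecay_le (hr : 0 < r) (hlam : 0 ≤ lam) (hz : 0 < z)
    (hc : 0 < 1 - lam * z) :
    ∑' i, g r lam i z * ∑ j ∈ Icc 1 i, ratioDecay r lam j z
      ≤ r / (z * (r + z)) * f r lam z := by
  have hs := summable_g_mul_sum_ratioDecay hr hlam hz hc
  rw [hs.tsum_eq_zero_add, Icc_eq_empty (by omega), sum_empty, mul_zero, zero_add,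
    ← ((hasSum_succ_mul_sub_g hr hlam hz hc).mul_left _).tsum_eq]
  exact ((summable_nat_add_iff 1).2 hs).tsum_le_tsum (g_mul_sum_ratioDecay_succ_le hr hlam hz hc)
    ((hasSum_succ_mul_sub_g hr hlam hz hc).summable.mul_left _)

lemma tsum_gDeriv_pos (hr : 0 < r) (hlam : 0 ≤ lam) (hz : 0 < z) (hc : 0 < 1 - lam * z) :
    0 < ∑' i, gDeriv r lam i z := by
  have hf : 0 < f r lam z := by
    have h := (summable_g hr hlam hz hc).le_tsum 0 fun j _ => (g_pos hr hz hc j).le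
    rw [g_zero] at h
    exact hz.trans_le h
  have hcoef : r / (z * (r + z)) < 1 / z := by
    rw [div_lt_div_iff₀ (by positivity) hz]; nlinarith
  have hsplit : ∑' i, gDeriv r lam i z
      = f r lam z * (1 / z) - ∑' i, g r lam i z * ∑ j ∈ Icc 1 i, ratioDecay r lam j z := by
    simp only [gDeriv, mul_sub]
    rw [((summable_g hr hlam hz hc).mul_right _).tsum_sub
      (summable_g_mul_sum_ratioDecay hr hlam hz hc), tsum_mul_right, f]
  rw [hsplit]
  nlinarith [tsum_g_mul_sum_ratioDecay_le hr hlam hz hc]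

lemma norm_gDeriv_le {a b : ℝ} (hr : 0 < r) (hlam : 0 ≤ lam) (ha : 0 < a) (haz : a ≤ z)
    (hzb : z ≤ b) (hcb : 0 < 1 - lam * b) (i : ℕ) :
    ‖gDeriv r lam i z‖
      ≤ b * (r / (r + a)) ^ i * (1 / a + i * ((i + lam * r) / ((1 - lam * b) * r))) := by
  have hz : 0 < z := ha.trans_le haz
  have hc : 0 < 1 - lam * z := by nlinarith
  set S := ∑ j ∈ Icc 1 i, ratioDecay r lam j z
  have hS0 : 0 ≤ S := sum_nonneg fun j _ => ratioDecay_nonneg hr hlam hz.le hc j.cast_nonneg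
  have hψ : ratioDecay r lam i z ≤ (i + lam * r) / ((1 - lam * b) * r) := by
    apply div_le_div₀ (by positivity) le_rfl (by positivity)
    nlinarith [mul_le_mul_of_nonneg_left hzb hlam,
      mul_nonneg (i.cast_nonneg : (0 : ℝ) ≤ i) hz.le]
  have hS : S ≤ i * ((i + lam * r) / ((1 - lam * b) * r)) :=
    (sum_ratioDecay_le hr hz.le hc i).trans (by gcongr)
  have habs : |1 / z - S| ≤ 1 / a + i * ((i + lam * r) / ((1 - lam * b) * r)) := by
    have : 1 / z ≤ 1 / a := one_div_le_one_div_of_le ha haz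
    rw [abs_le]; constructor <;> nlinarith [one_div_pos.2 hz]
  rw [gDeriv, Real.norm_eq_abs, abs_mul, abs_of_pos (g_pos hr hz hc i)]
  have hb : 0 < b := hz.trans_le hzb
  have hg := g_le_geometric hr hlam ha haz hc i
  exact mul_le_mul (hg.trans (by gcongr)) habs (abs_nonneg _) (by positivity)

lemma hasDerivAt_f (hr : 0 < r) (hlam₀ : 0 ≤ lam) (hlam₁ : lam ≤ 1) (hz₀ : 0 < z)
    (hz₁ : z < 1) :
    HasDerivAt (f r lam) (∑' i, gDeriv r lam i z) z := by
  set a := z / 2 with ha_def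
  set b := (1 + z) / 2 with hb_def
  have ha : 0 < a := by positivity
  have hcb : 0 < 1 - lam * b := by
    nlinarith [mul_le_of_le_one_left (by positivity : 0 ≤ b) hlam₁]
  have hzt : z ∈ Set.Ioo a b := ⟨by linarith, by linarith⟩
  set q := r / (r + a)
  have hq : ‖q‖ < 1 := by
    rw [Real.norm_eq_abs, abs_of_pos (by positivity), div_lt_one (by positivity)]; linarith
  have hbound : Summable fun i : ℕ =>
      b * q ^ i * (1 / a + i * ((i + lam * r) / ((1 - lam * b) * r))) := by
    have := (((summable_geometric_of_norm_lt_one hq).mul_left (b / a)).add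
      ((summable_pow_mul_geometric_of_norm_lt_one 2 hq).mul_left (b / ((1 - lam * b) * r)))).add
      ((summable_pow_mul_geometric_of_norm_lt_one 1 hq).mul_left (b * lam / (1 - lam * b)))
    refine this.congr fun i => ?_
    field_simp
    ring
  exact hasDerivAt_tsum_of_isPreconnected hbound isOpen_Ioo isPreconnected_Ioo
    (fun i y hy => hasDerivAt_g hr (ha.trans hy.1) (by nlinarith [hy.2, hlam₀]) i)
    (fun i y hy => norm_gDeriv_le hr hlam₀ ha hy.1.le hy.2.le hcb i) hzt
    (summable_g hr hlam₀ hz₀ (by nlinarith [mul_le_of_le_one_left hz₀.le hlam₁])) hzt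

theorem strictMonoOn_f (hr : 0 < r) (hlam₀ : 0 ≤ lam) (hlam₁ : lam ≤ 1) :
    StrictMonoOn (f r lam) (Set.Ioo 0 1) := by
  refine strictMonoOn_of_deriv_pos (convex_Ioo 0 1)
    (fun y hy => (hasDerivAt_f hr hlam₀ hlam₁ hy.1 hy.2).continuousAt.continuousWithinAt)
    fun y hy => ?_
  rw [interior_Ioo] at hy
  rw [(hasDerivAt_f hr hlam₀ hlam₁ hy.1 hy.2).deriv]
  exact tsum_gDeriv_pos hr hlam₀ hy.1 (by nlinarith [mul_le_of_le_one_left hy.1.le hlam₁, hy.2])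

end

theorem stmt2 (r lam : ℝ) (hr : 0 < r) (hlam : lam ∈ Set.Ioo (0:ℝ) 1) :
    ∀ x y : ℝ, 0 < x → x < y → y < 1 → f r lam x < f r lam y := fun _ _ hx hxy hy =>
  strictMonoOn_f hr hlam.1.le hlam.2.le ⟨hx, hxy.trans hy⟩ ⟨hx.trans hxy, hy⟩ hxy
end

section
/- For every real x > 0 and every real a ≥ 0, the lower incomplete Gamma function satisfies ∫_0^a t^{x−1} e^{−t} dt = a^x · e^{−a} · Σ_{k=0}^∞ a^k / (x(x+1)···(x+k)), where the denominator of the k-th term is ∏_{j=0}^{k} (x+j). -/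
/-! Integration by parts gives `γ(s + 1, a) = s γ(s, a) - a ^ s e ^ (-a)`. Dividing by
`(x)ₙ₊₁ = x (x + 1) ⋯ (x + n)` turns the `n`-th term of the series into the difference `Rₙ - Rₙ₊₁`
of the remainders `Rₙ = γ(x + n, a) / (x)ₙ`, so the series telescopes to `R₀ = γ(x, a)`, since
`Rₙ ≤ a ^ (x + n) / (x)ₙ₊₁ ≤ (a ^ x / x) a ^ n / n! → 0`. -/

open Real MeasureTheory Filter Set Finset Nat Topology

noncomputable def lowerGamma (s a : ℝ) : ℝ :=
  ∫ t in Ioo 0 a, t ^ (s - 1) * exp (-t)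

lemma ofReal_lowerGamma (s : ℝ) {a : ℝ} (ha : 0 ≤ a) :
    (lowerGamma s a : ℂ) = Complex.partialGamma s a := by
  rw [lowerGamma, Complex.partialGamma, intervalIntegral.integral_of_le ha,
    integral_Ioc_eq_integral_Ioo, ← integral_complex_ofReal]
  refine setIntegral_congr_fun measurableSet_Ioo fun t ht => ?_
  push_cast [Complex.ofReal_cpow ht.1.le]
  ring

lemma lowerGamma_add_one {s a : ℝ} (hs : 0 < s) (ha : 0 ≤ a) :
    lowerGamma (s + 1) a = s * lowerGamma s a - a ^ s * exp (-a) := by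
  apply Complex.ofReal_injective
  push_cast [ofReal_lowerGamma _ ha, Complex.ofReal_cpow ha]
  rw [Complex.partialGamma_add_one (by simpa using hs) ha, Complex.ofReal_exp]
  push_cast
  ring

lemma lowerGamma_nonneg (s a : ℝ) : 0 ≤ lowerGamma s a :=
  setIntegral_nonneg measurableSet_Ioo fun t ht => by
    have := ht.1.le
    positivity

lemma lowerGamma_le {s a : ℝ} (hs : 0 < s) (ha : 0 ≤ a) : lowerGamma s a ≤ a ^ s / s := by
  have hpow : IntegrableOn (fun t : ℝ => t ^ (s - 1)) (Ioo 0 a) := by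
    rw [← intervalIntegrable_iff_integrableOn_Ioo_of_le ha]
    exact intervalIntegral.intervalIntegrable_rpow' (by linarith)
  calc lowerGamma s a ≤ ∫ t in Ioo 0 a, t ^ (s - 1) := by
        refine setIntegral_mono_on ?_ hpow measurableSet_Ioo fun t ht => ?_
        · exact (GammaIntegral_convergent hs).mono_set Ioo_subset_Ioi_self
            |>.congr_fun (fun t _ => mul_comm _ _) measurableSet_Ioo
        · exact mul_le_of_le_one_right (rpow_nonneg ht.1.le _)
            (exp_le_one_iff.mpr (neg_nonpos.mpr ht.1.le))
    _ = a ^ s / s := by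
        rw [← integral_Ioc_eq_integral_Ioo, ← intervalIntegral.integral_of_le ha,
          integral_rpow (by left; linarith)]
        simp [zero_rpow hs.ne']

lemma mul_factorial_le_prod_range_add {x : ℝ} (hx : 0 ≤ x) (n : ℕ) :
    x * n ! ≤ ∏ j ∈ range (n + 1), (x + j) := by
  rw [prod_range_succ', ← prod_range_add_one_eq_factorial, mul_comm, Nat.cast_prod]
  push_cast
  refine mul_le_mul (prod_le_prod (fun j _ => by positivity) fun j _ => ?_) (by simp) hx
    (by positivity)
  linarith

section Series

variable {x a : ℝ}

lemma lowerGamma_div_prod_sub_succ (hx : 0 < x) (ha : 0 ≤ a) (n : ℕ) :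
    lowerGamma (x + n) a / ∏ j ∈ range n, (x + j) -
        lowerGamma (x + (n + 1 : ℕ)) a / ∏ j ∈ range (n + 1), (x + j) =
      a ^ x * exp (-a) * (a ^ n / ∏ j ∈ range (n + 1), (x + j)) := by
  have hxn : 0 < x + n := by positivity
  rw [prod_range_succ, Nat.cast_succ, ← add_assoc, lowerGamma_add_one hxn ha,
    rpow_add_natCast' ha hxn.ne']
  field_simp
  ring

lemma tendsto_lowerGamma_div_prod (hx : 0 < x) (ha : 0 ≤ a) :
    Tendsto (fun n : ℕ => lowerGamma (x + n) a / ∏ j ∈ range n, (x + j)) atTop (𝓝 0) := by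
  have hbound (n : ℕ) :
      lowerGamma (x + n) a / ∏ j ∈ range n, (x + j) ≤ a ^ x / x * (a ^ n / n !) := by
    have hxn : 0 < x + n := by positivity
    calc lowerGamma (x + n) a / ∏ j ∈ range n, (x + j)
        ≤ a ^ (x + n) / (x + n) / ∏ j ∈ range n, (x + j) := by
          gcongr
          exact lowerGamma_le hxn ha
      _ = a ^ x * a ^ n / ∏ j ∈ range (n + 1), (x + j) := by
          rw [prod_range_succ, rpow_add_natCast' ha hxn.ne', div_div, mul_comm (x + n)]
      _ ≤ a ^ x * a ^ n / (x * n !) := by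
          gcongr
          exact mul_factorial_le_prod_range_add hx.le n
      _ = a ^ x / x * (a ^ n / n !) := by ring
  refine squeeze_zero (fun n => div_nonneg (lowerGamma_nonneg _ _) (by positivity)) hbound ?_
  simpa using (FloorSemiring.tendsto_pow_div_factorial_atTop a).const_mul (a ^ x / x)

lemma hasSum_lowerGamma (hx : 0 < x) (ha : 0 ≤ a) :
    HasSum (fun n : ℕ => a ^ x * exp (-a) * (a ^ n / ∏ j ∈ range (n + 1), (x + j)))
      (lowerGamma x a) := by
  rw [hasSum_iff_tendsto_nat_of_nonneg (fun n => by positivity)]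
  simp_rw [← lowerGamma_div_prod_sub_succ hx ha, sum_range_sub']
  simpa using tendsto_const_nhds.sub (tendsto_lowerGamma_div_prod hx ha)

end Series

theorem stmt5 (x a : ℝ) (hx : 0 < x) (ha : 0 ≤ a) :
    ∫ t in Set.Ioo (0:ℝ) a, t ^ (x - 1) * Real.exp (-t) =
      a ^ x * Real.exp (-a) *
        ∑' k : ℕ, a ^ k / ∏ j ∈ Finset.range (k + 1), (x + (j : ℝ)) := by
  rw [← tsum_mul_left]
  exact (hasSum_lowerGamma hx ha).tsum_eq.symm
end

section
/- For every r > 0, λ ∈ (0,1) and p₀ ∈ (0,1), setting a = r(1/p₀ − λ) > 0, the function f admits the representation f(p₀) = p₀ + p₀ · e^{a} · a^{−r/p₀} · ∫_0^a t^{r/p₀} e^{−t} dt. -/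
open scoped BigOperators

/-!
With `c = r / p₀` one has `r + j p₀ = p₀ (c + j)` and `r (1 - λ p₀) = a p₀`, so
`g_i(p₀) = p₀ aⁱ / ∏_{j=1}^i (c + j)`. Integrating `∫_0^a t^c e^{-t} dt` by parts `N` times,
each time raising the power of `t`, gives `e^{-a} a^c ∑_{i=1}^N aⁱ / ∏_{j=1}^i (c + j)` plus the
remainder `∫_0^a t^{c+N} e^{-t} dt / ∏_{j=1}^N (c + j) ≤ a^{c+N+1} / N!`, which tends to zero.
-/

open MeasureTheory Real Finset Filter Topology
open scoped Nat Interval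

lemma prod_Icc_add_natCast_pos {c : ℝ} (hc : -1 < c) (n : ℕ) : 0 < ∏ j ∈ Icc 1 n, (c + j) :=
  prod_pos fun j hj => by
    have : (1 : ℝ) ≤ j := by exact_mod_cast (mem_Icc.1 hj).1
    linarith

lemma factorial_le_prod_Icc_add_natCast {c : ℝ} (hc : 0 ≤ c) (n : ℕ) :
    (n ! : ℝ) ≤ ∏ j ∈ Icc 1 n, (c + j) := by
  rw [← prod_Ico_id_eq_factorial, Ico_add_one_right_eq_Icc, Nat.cast_prod]
  exact prod_le_prod (fun j _ => by positivity) fun j _ => by linarith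

lemma continuous_rpow_mul_exp_neg {d : ℝ} (hd : 0 ≤ d) :
    Continuous fun t : ℝ => t ^ d * exp (-t) :=
  (continuous_id.rpow_const fun _ => Or.inr hd).mul (continuous_exp.comp continuous_neg)

lemma integral_rpow_mul_exp_neg_eq {d : ℝ} (hd : 0 ≤ d) (x : ℝ) :
    ∫ t in 0..x, t ^ d * exp (-t) =
      (x ^ (d + 1) * exp (-x) + ∫ t in 0..x, t ^ (d + 1) * exp (-t)) / (d + 1) := by
  have hu : ∀ t ∈ [[0, x]], HasDerivAt (fun t : ℝ => t ^ (d + 1)) ((d + 1) * t ^ d) t :=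
    fun t _ => by simpa using hasDerivAt_rpow_const (x := t) (p := d + 1) (Or.inr (by linarith))
  have hv : ∀ t ∈ [[0, x]], HasDerivAt (fun t : ℝ => exp (-t)) (-exp (-t)) t :=
    fun t _ => by simpa using (hasDerivAt_neg t).exp
  have hparts := intervalIntegral.integral_deriv_mul_eq_sub hu hv
    ((continuous_const.mul (continuous_id.rpow_const fun _ => Or.inr hd)).intervalIntegrable _ _)
    ((continuous_exp.comp continuous_neg).neg.intervalIntegrable _ _)
  have hint (e : ℝ) (he : 0 ≤ e) : IntervalIntegrable (fun t : ℝ => t ^ e * exp (-t)) volume 0 x :=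
    (continuous_rpow_mul_exp_neg he).intervalIntegrable _ _
  simp only [mul_neg, mul_assoc, ← sub_eq_add_neg] at hparts
  rw [intervalIntegral.integral_sub ((hint d hd).const_mul _) (hint _ (by linarith)),
    intervalIntegral.integral_const_mul, zero_rpow (by linarith)] at hparts
  field_simp
  linarith

lemma integral_rpow_mul_exp_neg_eq_sum {c x : ℝ} (hc : 0 ≤ c) (hx : 0 < x) (N : ℕ) :
    ∫ t in 0..x, t ^ c * exp (-t) =
      exp (-x) * x ^ c * ∑ i ∈ range N, x ^ (i + 1) / ∏ j ∈ Icc 1 (i + 1), (c + j) +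
        (∫ t in 0..x, t ^ (c + N) * exp (-t)) / ∏ j ∈ Icc 1 N, (c + j) := by
  induction N with
  | zero => simp
  | succ N ih =>
    have hstep := integral_rpow_mul_exp_neg_eq (d := c + N) (by positivity) x
    have hP := prod_Icc_add_natCast_pos (c := c) (by linarith) N
    rw [ih, hstep, sum_range_succ, prod_Icc_succ_top (by omega), add_assoc c, rpow_add hx,
      ← Nat.cast_add_one, rpow_natCast]
    field_simp
    ring

lemma tendsto_integral_rpow_add_mul_exp_neg_div_prod {c x : ℝ} (hc : 0 ≤ c) (hx : 0 < x) :
    Tendsto (fun N : ℕ => (∫ t in 0..x, t ^ (c + N) * exp (-t)) / ∏ j ∈ Icc 1 N, (c + j))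
      atTop (𝓝 0) := by
  have hbound (N : ℕ) : ‖(∫ t in 0..x, t ^ (c + N) * exp (-t)) / ∏ j ∈ Icc 1 N, (c + j)‖ ≤
      x ^ c * x * (x ^ N / N !) := by
    have hnorm : ‖∫ t in 0..x, t ^ (c + N) * exp (-t)‖ ≤ x ^ (c + N) * |x - 0| := by
      refine intervalIntegral.norm_integral_le_of_norm_le_const fun t ht => ?_
      rw [Set.uIoc_of_le hx.le] at ht
      have hpow : 0 ≤ t ^ (c + N) := rpow_nonneg ht.1.le _
      rw [norm_of_nonneg (mul_nonneg hpow (exp_pos _).le)]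
      calc t ^ (c + N) * exp (-t) ≤ t ^ (c + N) :=
            mul_le_of_le_one_right hpow (exp_le_one_iff.2 (by linarith [ht.1]))
        _ ≤ x ^ (c + N) := rpow_le_rpow ht.1.le ht.2 (by positivity)
    rw [norm_div, norm_of_nonneg (prod_Icc_add_natCast_pos (by linarith) N).le]
    calc _ ≤ x ^ (c + N) * |x - 0| / N ! :=
          div_le_div₀ (by positivity) hnorm (by positivity) (factorial_le_prod_Icc_add_natCast hc N)
      _ = x ^ c * x * (x ^ N / N !) := by
          rw [rpow_add hx, rpow_natCast, sub_zero, abs_of_pos hx]; ring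
  refine squeeze_zero_norm hbound ?_
  simpa using (FloorSemiring.tendsto_pow_div_factorial_atTop x).const_mul (x ^ c * x)

theorem hasSum_pow_div_prod_Icc_add_natCast {c x : ℝ} (hc : 0 ≤ c) (hx : 0 < x) :
    HasSum (fun i : ℕ => x ^ i / ∏ j ∈ Icc 1 i, (c + j))
      (1 + exp x * x ^ (-c) * ∫ t in 0..x, t ^ c * exp (-t)) := by
  set I := ∫ t in 0..x, t ^ c * exp (-t)
  set R := fun N : ℕ => (∫ t in 0..x, t ^ (c + N) * exp (-t)) / ∏ j ∈ Icc 1 N, (c + j)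
  have hpartial (N : ℕ) : ∑ i ∈ range N, x ^ (i + 1) / ∏ j ∈ Icc 1 (i + 1), (c + j) =
      exp x * x ^ (-c) * (I - R N) := by
    have hexp : I = exp (-x) * x ^ c *
        ∑ i ∈ range N, x ^ (i + 1) / ∏ j ∈ Icc 1 (i + 1), (c + j) + R N :=
      integral_rpow_mul_exp_neg_eq_sum hc hx N
    rw [hexp, add_sub_cancel_right, ← mul_assoc, mul_mul_mul_comm, ← exp_add, add_neg_cancel,
      exp_zero, one_mul, ← rpow_add hx, neg_add_cancel, rpow_zero, one_mul]
  have hlim : Tendsto (fun N => exp x * x ^ (-c) * (I - R N)) atTop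
      (𝓝 (exp x * x ^ (-c) * I)) := by
    simpa using ((tendsto_integral_rpow_add_mul_exp_neg_div_prod hc hx).const_sub I).const_mul
      (exp x * x ^ (-c))
  have htail : HasSum (fun i : ℕ => x ^ (i + 1) / ∏ j ∈ Icc 1 (i + 1), (c + j))
      (exp x * x ^ (-c) * I) :=
    (hasSum_iff_tendsto_nat_of_nonneg
      (fun i => div_nonneg (by positivity) (prod_Icc_add_natCast_pos (by linarith) _).le) _).2
      (by simpa only [hpartial] using hlim)
  have h := (hasSum_nat_add_iff (f := fun i : ℕ => x ^ i / ∏ j ∈ Icc 1 i, (c + j)) 1).1 htail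
  rwa [sum_range_one, pow_zero, Icc_eq_empty_of_lt zero_lt_one, prod_empty, div_one,
    add_comm] at h

lemma g_eq_mul_pow_div_prod {r lam p : ℝ} (hp : p ≠ 0) (i : ℕ) :
    g r lam i p = p * ((r * (1 / p - lam)) ^ i / ∏ j ∈ Icc 1 i, (r / p + j)) := by
  have hprod : ∏ j ∈ Icc 1 i, (r + j * p) = p ^ i * ∏ j ∈ Icc 1 i, (r / p + j) := by
    calc ∏ j ∈ Icc 1 i, (r + j * p) = ∏ j ∈ Icc 1 i, p * (r / p + j) :=
          prod_congr rfl fun j _ => by field_simp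
      _ = p ^ i * ∏ j ∈ Icc 1 i, (r / p + j) := by simp [prod_mul_distrib]
  have hbase : r * (1 / p - lam) = r * (1 - lam * p) / p := by field_simp
  rw [g, hprod, hbase, div_pow, mul_pow]
  ring

theorem stmt6 (r lam p₀ : ℝ) (hr : 0 < r) (hlam : lam ∈ Set.Ioo (0:ℝ) 1)
    (hp : p₀ ∈ Set.Ioo (0:ℝ) 1) (a : ℝ) (ha : a = r * (1 / p₀ - lam)) :
    0 < a ∧
      f r lam p₀ =
        p₀ + p₀ * Real.exp a * a ^ (-(r / p₀)) *
          ∫ t in Set.Ioo (0:ℝ) a, t ^ (r / p₀) * Real.exp (-t) := by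
  obtain ⟨hp₀, hp₁⟩ := hp
  have ha_pos : 0 < a := by
    have : 1 < 1 / p₀ := by rw [lt_div_iff₀ hp₀]; linarith
    rw [ha]
    exact mul_pos hr (by linarith [hlam.2])
  refine ⟨ha_pos, ?_⟩
  have hseries := (hasSum_pow_div_prod_Icc_add_natCast (div_pos hr hp₀).le ha_pos).mul_left p₀
  rw [← integral_Ioc_eq_integral_Ioo, ← intervalIntegral.integral_of_le ha_pos.le, f]
  simp only [g_eq_mul_pow_div_prod hp₀.ne', ← ha]
  rw [hseries.tsum_eq]
  ring
end

section
/- For every r > 0, λ ∈ (0,1) and p₀ ∈ (0,1], the identity Σ_{i=0}^∞ i · g_i(p₀) = r − r·λ·Σ_{i=0}^∞ g_i(p₀) holds, i.e., Σ_{i=0}^∞ i·g_i(p₀) = r − rλ·f(p₀). -/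
open scoped BigOperators

/-!
The terms satisfy the first-order recurrence `(r + (i+1)x) g_{i+1} = r(1-λx) g_i`. Rewritten as
`x (i+1) g_{i+1} = r(1-λx) g_i - r g_{i+1}` and summed over `i`, it expresses `x Σ i g_i` through
`f = Σ g_i`, which gives the identity after dividing by `x`. Summability of `g` comes from
`∏_{j=1}^i (r + j x) ≥ i! x^i`, which dominates `g` by an exponential series.
-/

section

variable {r lam x : ℝ}

theorem prod_Icc_add_mul_pos (hr : 0 < r) (hx : 0 ≤ x) (i : ℕ) :
    0 < ∏ j ∈ Finset.Icc 1 i, (r + (j : ℝ) * x) :=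
  Finset.prod_pos fun _ _ => by positivity

theorem factorial_mul_pow_le_prod_Icc_add_mul (hr : 0 ≤ r) (hx : 0 ≤ x) (i : ℕ) :
    (i.factorial : ℝ) * x ^ i ≤ ∏ j ∈ Finset.Icc 1 i, (r + (j : ℝ) * x) := by
  induction i with
  | zero => simp
  | succ i ih =>
    rw [Finset.prod_Icc_succ_top (Nat.le_add_left 1 i), Nat.factorial_succ]
    push_cast
    calc ((i : ℝ) + 1) * i.factorial * x ^ (i + 1)
        = (i.factorial * x ^ i) * (((i : ℝ) + 1) * x) := by ring
      _ ≤ (∏ j ∈ Finset.Icc 1 i, (r + (j : ℝ) * x)) * (r + ((i : ℝ) + 1) * x) := by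
        gcongr
        linarith

namespace g

theorem succ_mul (hr : 0 < r) (hx : 0 ≤ x) (i : ℕ) :
    (r + ((i + 1 : ℕ) : ℝ) * x) * g r lam (i + 1) x = r * (1 - lam * x) * g r lam i x := by
  have hP := (prod_Icc_add_mul_pos hr hx i).ne'
  have hE : r + ((i + 1 : ℕ) : ℝ) * x ≠ 0 := by positivity
  simp only [g, Finset.prod_Icc_succ_top (Nat.le_add_left 1 i)]
  field_simp
  ring

theorem abs_le (hr : 0 < r) (hx : 0 < x) (i : ℕ) :
    |g r lam i x| ≤ x * (|r * (1 - lam * x)| / x) ^ i / i.factorial := by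
  have hP := prod_Icc_add_mul_pos hr hx.le i
  rw [g, abs_div, abs_of_pos hP, mul_assoc, abs_mul, abs_of_pos hx, ← mul_pow, abs_pow,
    mul_div_assoc, mul_div_assoc, div_pow, div_div]
  gcongr
  rw [mul_comm]
  exact factorial_mul_pow_le_prod_Icc_add_mul hr.le hx.le i

theorem summable (hr : 0 < r) (hx : 0 < x) : Summable (fun i => g r lam i x) :=
  Summable.of_norm_bounded ((Real.summable_pow_div_factorial _).mul_left x)
    fun i => (abs_le hr hx i).trans_eq (mul_div_assoc _ _ _)

theorem mul_natCast_succ_mul (hr : 0 < r) (hx : 0 ≤ x) (i : ℕ) :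
    x * (((i + 1 : ℕ) : ℝ) * g r lam (i + 1) x) =
      r * (1 - lam * x) * g r lam i x - r * g r lam (i + 1) x := by
  linear_combination succ_mul (lam := lam) hr hx i

theorem summable_natCast_mul (hr : 0 < r) (hx : 0 < x) :
    Summable (fun i : ℕ => (i : ℝ) * g r lam i x) := by
  have hg := summable (lam := lam) hr hx
  have hg1 := (summable_nat_add_iff 1).mpr hg
  refine (summable_nat_add_iff 1).mp ?_
  have h := ((hg.mul_left (r * (1 - lam * x))).sub (hg1.mul_left r)).div_const x
  refine h.congr fun i => ?_
  rw [← mul_natCast_succ_mul hr hx.le i]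
  field_simp

theorem tsum_natCast_mul (hr : 0 < r) (hx : 0 < x) :
    ∑' i : ℕ, (i : ℝ) * g r lam i x = r - r * lam * f r lam x := by
  have hg := summable (lam := lam) hr hx
  have hg1 := (summable_nat_add_iff 1).mpr hg
  have hf : f r lam x = x + ∑' i : ℕ, g r lam (i + 1) x := by
    rw [f, hg.tsum_eq_zero_add]
    simp [g]
  refine mul_left_cancel₀ hx.ne' ?_
  calc x * ∑' i : ℕ, (i : ℝ) * g r lam i x
      = ∑' i : ℕ, x * (((i + 1 : ℕ) : ℝ) * g r lam (i + 1) x) := by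
        rw [(summable_natCast_mul hr hx).tsum_eq_zero_add, tsum_mul_left]
        simp
    _ = r * (1 - lam * x) * f r lam x - r * ∑' i : ℕ, g r lam (i + 1) x := by
        simp only [mul_natCast_succ_mul hr hx.le]
        rw [(hg.mul_left _).tsum_sub (hg1.mul_left r), tsum_mul_left, tsum_mul_left, f]
    _ = x * (r - r * lam * f r lam x) := by
        rw [hf]; ring

end g

end

theorem stmt8_general (r lam p₀ : ℝ) (hr : 0 < r)
    (hp : p₀ ∈ Set.Ioc (0:ℝ) 1) :
    ∑' i : ℕ, (i : ℝ) * g r lam i p₀ = r - r * lam * f r lam p₀ :=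
  g.tsum_natCast_mul hr hp.1

theorem stmt8 (r lam p₀ : ℝ) (hr : 0 < r) (hlam : lam ∈ Set.Ioo (0:ℝ) 1)
    (hp : p₀ ∈ Set.Ioc (0:ℝ) 1) :
    ∑' i : ℕ, (i : ℝ) * g r lam i p₀ = r - r * lam * f r lam p₀ :=
  stmt8_general r lam p₀ hr hp
end

section
/- Let r > 0, λ ∈ (0,1) and p̂₀ ∈ (0,1). Define p_0 = p̂₀ and p_j = r·q̂_{(0,j)}/j for j ≥ 1. Then the JIQ stationary distribution satisfies the local balance equations: (i) q̂_i · 1 = q̂_{i−1} · λ·p̂₀ for every i ≥ 2; (ii) q̂_{(0,j)} · λ(p̂₀ + r/j) = q̂_1 · p_{j−1} for every j ≥ 1; (iii) q̂_{(0,j)} · λ(j−1)(p̂₀ + r/j) = q̂_{(0,j−1)} · r·q̂_1 for every j ≥ 2. -/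
open scoped BigOperators

/-- `q̂_{(0,i)} = i·p̂₀·r^{i−1}(1−λp̂₀)^i / ∏_{j=1}^i (r + j·p̂₀)` for `i ≥ 1`. -/
noncomputable def qIdle (r lam p₀ : ℝ) (i : ℕ) : ℝ :=
  (i : ℝ) * p₀ * r ^ (i - 1) * (1 - lam * p₀) ^ i / ∏ j ∈ Finset.Icc 1 i, (r + (j : ℝ) * p₀)

/-- `q̂_i = p̂₀^{i−1} λ^i (1−λp̂₀)` for `i ≥ 1`. -/
noncomputable def qLen (lam p₀ : ℝ) (i : ℕ) : ℝ := p₀ ^ (i - 1) * lam ^ i * (1 - lam * p₀)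

/-- The fraction of I-queues of size `j`: `p_0 = p̂₀` and `p_j = r·q̂_{(0,j)}/j` for `j ≥ 1`. -/
noncomputable def pIQ (r lam p₀ : ℝ) (j : ℕ) : ℝ :=
  if j = 0 then p₀ else r * qIdle r lam p₀ j / (j : ℝ)

/-!
The fraction `p_n` is `g_n(p̂₀) = p̂₀ rⁿ (1-λp̂₀)ⁿ / ∏_{k ≤ n} (r + k p̂₀)`, and `q̂_{(0,n+1)}` is
`g_n(p̂₀)` times `(n+1)(1-λp̂₀) / (r + (n+1)p̂₀)`, whose denominator the rate
`λ(p̂₀ + r/(n+1)) = λ(r + (n+1)p̂₀)/(n+1)` cancels; this gives (ii). Since `(j-1) p_{j-1} = r q̂_{(0,j-1)}`,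
(iii) is `j - 1` times (ii).
-/

section LocalBalance

variable {r lam p₀ : ℝ}

lemma qLen_one : qLen lam p₀ 1 = lam * (1 - lam * p₀) := by
  simp [qLen]

lemma qLen_eq_qLen_pred_mul {i : ℕ} (hi : 2 ≤ i) :
    qLen lam p₀ i = qLen lam p₀ (i - 1) * (lam * p₀) := by
  obtain ⟨n, rfl⟩ : ∃ n, i = n + 2 := ⟨i - 2, by omega⟩
  simp only [qLen, Nat.add_sub_cancel, show n + 2 - 1 = n + 1 from rfl]
  ring

lemma pIQ_eq_g (n : ℕ) : pIQ r lam p₀ n = g r lam n p₀ := by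
  rcases n with _ | n
  · simp [pIQ, g]
  · have hn : ((n + 1 : ℕ) : ℝ) ≠ 0 := by positivity
    simp only [pIQ, qIdle, g, Nat.add_sub_cancel, n.succ_ne_zero, if_false]
    field_simp
    ring

lemma qIdle_succ_mul (n : ℕ) (h : r + ((n + 1 : ℕ) : ℝ) * p₀ ≠ 0) :
    qIdle r lam p₀ (n + 1) * (r + ((n + 1 : ℕ) : ℝ) * p₀) =
      ((n + 1 : ℕ) : ℝ) * (1 - lam * p₀) * g r lam n p₀ := by
  rw [qIdle, g, Finset.prod_Icc_succ_top (by omega), Nat.add_sub_cancel]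
  field_simp
  ring

lemma qIdle_mul_rate_eq_qLen_one_mul_pIQ {j : ℕ} (hj : 1 ≤ j) (h : r + (j : ℝ) * p₀ ≠ 0) :
    qIdle r lam p₀ j * (lam * (p₀ + r / (j : ℝ))) = qLen lam p₀ 1 * pIQ r lam p₀ (j - 1) := by
  obtain ⟨n, rfl⟩ : ∃ n, j = n + 1 := ⟨j - 1, by omega⟩
  have hn : ((n + 1 : ℕ) : ℝ) ≠ 0 := by positivity
  have rate : lam * (p₀ + r / ((n + 1 : ℕ) : ℝ)) =
      lam / ((n + 1 : ℕ) : ℝ) * (r + ((n + 1 : ℕ) : ℝ) * p₀) := by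
    field_simp
    ring
  rw [rate, mul_left_comm, qIdle_succ_mul n h, qLen_one, Nat.add_sub_cancel, pIQ_eq_g]
  field_simp

lemma qIdle_mul_rate_eq_qIdle_pred_mul {j : ℕ} (hj : 2 ≤ j) (h : r + (j : ℝ) * p₀ ≠ 0) :
    qIdle r lam p₀ j * (lam * ((j : ℝ) - 1) * (p₀ + r / (j : ℝ))) =
      qIdle r lam p₀ (j - 1) * (r * qLen lam p₀ 1) := by
  have hj' : ((j - 1 : ℕ) : ℝ) = (j : ℝ) - 1 := by push_cast [show 1 ≤ j by omega]; ring
  have hpred : ((j - 1 : ℕ) : ℝ) ≠ 0 := by rw [Nat.cast_ne_zero]; omega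
  calc qIdle r lam p₀ j * (lam * ((j : ℝ) - 1) * (p₀ + r / (j : ℝ)))
      = ((j : ℝ) - 1) * (qIdle r lam p₀ j * (lam * (p₀ + r / (j : ℝ)))) := by ring
    _ = ((j - 1 : ℕ) : ℝ) * (qLen lam p₀ 1 * pIQ r lam p₀ (j - 1)) := by
        rw [qIdle_mul_rate_eq_qLen_one_mul_pIQ (by omega) h, hj']
    _ = qIdle r lam p₀ (j - 1) * (r * qLen lam p₀ 1) := by
        rw [pIQ, if_neg (by omega)]
        field_simp

end LocalBalance

theorem stmt10_general (r lam p₀ : ℝ) (hr : 0 < r)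
    (hp : p₀ ∈ Set.Ioo (0:ℝ) 1) :
    (∀ i : ℕ, 2 ≤ i → qLen lam p₀ i * 1 = qLen lam p₀ (i - 1) * (lam * p₀)) ∧
      (∀ j : ℕ, 1 ≤ j →
        qIdle r lam p₀ j * (lam * (p₀ + r / (j : ℝ))) = qLen lam p₀ 1 * pIQ r lam p₀ (j - 1)) ∧
      (∀ j : ℕ, 2 ≤ j →
        qIdle r lam p₀ j * (lam * ((j : ℝ) - 1) * (p₀ + r / (j : ℝ))) =
          qIdle r lam p₀ (j - 1) * (r * qLen lam p₀ 1)) := by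
  have rate_ne_zero (j : ℕ) : r + (j : ℝ) * p₀ ≠ 0 := by
    have := hp.1
    positivity
  exact ⟨fun i hi => by rw [mul_one, qLen_eq_qLen_pred_mul hi],
    fun j hj => qIdle_mul_rate_eq_qLen_one_mul_pIQ hj (rate_ne_zero j),
    fun j hj => qIdle_mul_rate_eq_qIdle_pred_mul hj (rate_ne_zero j)⟩

theorem stmt10 (r lam p₀ : ℝ) (hr : 0 < r) (hlam : lam ∈ Set.Ioo (0:ℝ) 1)
    (hp : p₀ ∈ Set.Ioo (0:ℝ) 1) :
    (∀ i : ℕ, 2 ≤ i → qLen lam p₀ i * 1 = qLen lam p₀ (i - 1) * (lam * p₀)) ∧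
      (∀ j : ℕ, 1 ≤ j →
        qIdle r lam p₀ j * (lam * (p₀ + r / (j : ℝ))) = qLen lam p₀ 1 * pIQ r lam p₀ (j - 1)) ∧
      (∀ j : ℕ, 2 ≤ j →
        qIdle r lam p₀ j * (lam * ((j : ℝ) - 1) * (p₀ + r / (j : ℝ))) =
          qIdle r lam p₀ (j - 1) * (r * qLen lam p₀ 1)) :=
  stmt10_general r lam p₀ hr hp
end

section
/- For every λ ∈ (0,1) and p̂₀ ∈ (0,1), setting q̂_0 = 1 − λ and q̂_i = p̂₀^{i−1} λ^i (1−λp̂₀) for i ≥ 1, the expected task response time under JIQ satisfies (1 − p̂₀) + p̂₀ · Σ_{i=0}^∞ (i+1)·q̂_i = 1/(1 − p̂₀λ); in particular the series Σ_{i=0}^∞ (i+1)·q̂_i converges. -/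
/-- JIQ stationary queue-length distribution: `q̂_0 = 1 − λ` and
`q̂_i = p̂₀^{i−1} λ^i (1−λp̂₀)` for `i ≥ 1`. -/
noncomputable def qhat (lam p₀ : ℝ) (i : ℕ) : ℝ :=
  if i = 0 then 1 - lam else p₀ ^ (i - 1) * lam ^ i * (1 - lam * p₀)

/-!
With `x = p̂₀λ`, the tail of the queue-length distribution is geometric, `q̂_{k+1} = λ(1 - x) xᵏ`,
so `∑ (i+1) q̂_i = (1 - λ) + λ(1 - x) ∑ (k+2) xᵏ = (1 - λ) + λ(2 - x)/(1 - x)`, an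
arithmetico-geometric series; the response-time identity is then a rational-function identity in
`λ` and `p̂₀`.
-/

theorem hasSum_coe_add_two_mul_geometric {𝕜 : Type*} [NormedField 𝕜] [CompleteSpace 𝕜] {r : 𝕜}
    (hr : ‖r‖ < 1) : HasSum (fun n : ℕ ↦ ((n : 𝕜) + 2) * r ^ n) ((2 - r) / (1 - r) ^ 2) := by
  have hr₁ : 1 - r ≠ 0 := sub_ne_zero.mpr (by rintro rfl; simp at hr)
  convert (hasSum_coe_mul_geometric_of_norm_lt_one hr).add
    ((hasSum_geometric_of_norm_lt_one hr).mul_left 2) using 1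
  · ext n; ring
  · field_simp; ring

theorem qhat_succ (lam p₀ : ℝ) (k : ℕ) :
    qhat lam p₀ (k + 1) = lam * (1 - lam * p₀) * (p₀ * lam) ^ k := by
  simp only [qhat, Nat.add_one_ne_zero, if_false, Nat.add_sub_cancel, mul_pow, pow_succ]
  ring

theorem hasSum_succ_mul_qhat {lam p₀ : ℝ} (h : |p₀ * lam| < 1) :
    HasSum (fun i : ℕ ↦ ((i : ℝ) + 1) * qhat lam p₀ i)
      (1 - lam + lam * (2 - p₀ * lam) / (1 - p₀ * lam)) := by
  have hx : 1 - p₀ * lam ≠ 0 :=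
    sub_ne_zero.mpr fun h1 ↦ by rw [← h1, abs_one] at h; exact lt_irrefl _ h
  have htail : HasSum (fun k : ℕ ↦ (((k + 1 : ℕ) : ℝ) + 1) * qhat lam p₀ (k + 1))
      (lam * (1 - lam * p₀) * ((2 - p₀ * lam) / (1 - p₀ * lam) ^ 2)) := by
    have hgeom := hasSum_coe_add_two_mul_geometric (𝕜 := ℝ) (by rwa [Real.norm_eq_abs])
    refine (hgeom.mul_left _).congr_fun fun k ↦ ?_
    rw [qhat_succ]
    push_cast
    ring
  have hall := HasSum.zero_add (f := fun i : ℕ ↦ ((i : ℝ) + 1) * qhat lam p₀ i) htail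
  convert hall using 1
  simp only [qhat, if_true, Nat.cast_zero, zero_add, one_mul]
  field_simp

theorem stmt12 (lam p₀ : ℝ) (hlam : lam ∈ Set.Ioo (0:ℝ) 1) (hp : p₀ ∈ Set.Ioo (0:ℝ) 1) :
    Summable (fun i : ℕ => ((i : ℝ) + 1) * qhat lam p₀ i) ∧
      (1 - p₀) + p₀ * ∑' i : ℕ, ((i : ℝ) + 1) * qhat lam p₀ i = 1 / (1 - p₀ * lam) := by
  have hx₀ : 0 < p₀ * lam := mul_pos hp.1 hlam.1
  have hx₁ : p₀ * lam < 1 := mul_lt_one_of_nonneg_of_lt_one_left hp.1.le hp.2 hlam.2.le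
  have hsum := hasSum_succ_mul_qhat (abs_lt.mpr ⟨by linarith, hx₁⟩)
  refine ⟨hsum.summable, ?_⟩
  rw [hsum.tsum_eq]
  field_simp [(sub_pos.mpr hx₁).ne']
  ring
end

section
/- For every integer d ≥ 2, every λ, p̂₀ ∈ (0,1) and every integer i ≥ 1, the JIQ-Po(d) tail is no larger than the JIQ tail: λ^{σ(i)} · p̂₀^{σ(i−1)} ≤ λ^i · p̂₀^{i−1}, where σ(i) = Σ_{k=0}^{i−1} d^k; moreover the inequality is strict for i ≥ 2. -/
open scoped BigOperators

/-- `σ(i) = Σ_{k=0}^{i−1} d^k = (d^i − 1)/(d−1)`. -/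
def sigma' (d i : ℕ) : ℕ := ∑ k ∈ Finset.range i, d ^ k

/-- JIQ-Po(d) stationary tail distribution: `ŝ_i = λ^{σ(i)} p̂₀^{σ(i−1)}` (so `ŝ_0 = 1`). -/
noncomputable def shat (d : ℕ) (lam p₀ : ℝ) (i : ℕ) : ℝ :=
  lam ^ sigma' d i * p₀ ^ sigma' d (i - 1)

/- Both inequalities compare `σ(i) = Σ_{k<i} d^k` termwise with `i = Σ_{k<i} 1`; the term `k = 1`
is strict once `d ≥ 2`. Since `λ, p̂₀ < 1`, larger exponents give smaller powers. -/

lemma le_sigma' {d : ℕ} (hd : 1 ≤ d) (i : ℕ) : i ≤ sigma' d i := by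
  simpa [sigma'] using Finset.sum_le_sum fun k (_ : k ∈ Finset.range i) => Nat.one_le_pow k d hd

lemma lt_sigma' {d i : ℕ} (hd : 2 ≤ d) (hi : 2 ≤ i) : i < sigma' d i := by
  simpa [sigma'] using Finset.sum_lt_sum (s := Finset.range i) (f := fun _ => 1)
    (fun k _ => Nat.one_le_pow k d (by omega))
    ⟨1, Finset.mem_range.mpr (by omega), by rw [pow_one]; omega⟩

theorem stmt16_general (d : ℕ) (hd : 2 ≤ d) (lam p₀ : ℝ)
    (hlam : lam ∈ Set.Ioo (0:ℝ) 1) (hp : p₀ ∈ Set.Ioo (0:ℝ) 1)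
    (i : ℕ) :
    lam ^ sigma' d i * p₀ ^ sigma' d (i - 1) ≤ lam ^ i * p₀ ^ (i - 1) ∧
      (2 ≤ i → lam ^ sigma' d i * p₀ ^ sigma' d (i - 1) < lam ^ i * p₀ ^ (i - 1)) := by
  obtain ⟨hlam0, hlam1⟩ := hlam
  obtain ⟨hp0, hp1⟩ := hp
  have hlam_le : lam ^ sigma' d i ≤ lam ^ i :=
    pow_le_pow_of_le_one hlam0.le hlam1.le (le_sigma' (by omega) i)
  have hp_le : p₀ ^ sigma' d (i - 1) ≤ p₀ ^ (i - 1) :=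
    pow_le_pow_of_le_one hp0.le hp1.le (le_sigma' (by omega) (i - 1))
  refine ⟨mul_le_mul hlam_le hp_le (by positivity) (by positivity), fun hi => ?_⟩
  have hlam_lt : lam ^ sigma' d i < lam ^ i :=
    pow_lt_pow_right_of_lt_one₀ hlam0 hlam1 (lt_sigma' hd hi)
  exact mul_lt_mul hlam_lt hp_le (by positivity) (by positivity)

theorem stmt16 (d : ℕ) (hd : 2 ≤ d) (lam p₀ : ℝ)
    (hlam : lam ∈ Set.Ioo (0:ℝ) 1) (hp : p₀ ∈ Set.Ioo (0:ℝ) 1)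
    (i : ℕ) (hi : 1 ≤ i) :
    lam ^ sigma' d i * p₀ ^ sigma' d (i - 1) ≤ lam ^ i * p₀ ^ (i - 1) ∧
      (2 ≤ i → lam ^ sigma' d i * p₀ ^ sigma' d (i - 1) < lam ^ i * p₀ ^ (i - 1)) :=
  stmt16_general d hd lam p₀ hlam hp i
end

section
/- Let (a_i)_{i≥0} be a sequence of real numbers such that both (a_i) and (i·a_i) are summable, a_0 > 0, and there exists an integer k ≥ 1 with a_i ≥ 0 for all 1 ≤ i < k and a_i ≤ 0 for all i ≥ k. If there is a constant c > 0 with Σ_{i=0}^∞ i·a_i = −c · Σ_{i=0}^∞ a_i, then Σ_{i=0}^∞ a_i > 0. -/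
/-! The weights `i ↦ i` and `i ↦ k` compare termwise against a sequence that changes sign at `k`:
`i * a i ≤ k * a i`, strictly at `i = 0` because `a 0 > 0`. Summing gives `∑ i a_i < k ∑ a_i`, and
with `∑ i a_i = -c ∑ a_i` this reads `0 < (k + c) ∑ a_i`. -/

lemma natCast_mul_le_of_sign_change {a : ℕ → ℝ} {k : ℕ} (hpos : ∀ i < k, 0 ≤ a i)
    (hneg : ∀ i, k ≤ i → a i ≤ 0) (i : ℕ) : (i : ℝ) * a i ≤ k * a i := by
  rcases lt_or_ge i k with hik | hki
  · exact mul_le_mul_of_nonneg_right (by exact_mod_cast hik.le) (hpos i hik)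
  · exact mul_le_mul_of_nonpos_right (by exact_mod_cast hki) (hneg i hki)

lemma tsum_natCast_mul_lt_of_sign_change {a : ℕ → ℝ} {k : ℕ} (hk : 0 < k)
    (hsum : Summable a) (hsum' : Summable fun i : ℕ => (i : ℝ) * a i)
    (hpos : ∀ i < k, 0 ≤ a i) (hneg : ∀ i, k ≤ i → a i ≤ 0) (ha0 : 0 < a 0) :
    ∑' i : ℕ, (i : ℝ) * a i < k * ∑' i : ℕ, a i := by
  have hlt : ((0 : ℕ) : ℝ) * a 0 < k * a 0 := by
    rw [Nat.cast_zero, zero_mul]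
    exact mul_pos (by exact_mod_cast hk) ha0
  rw [← tsum_mul_left]
  exact hsum'.tsum_lt_tsum (natCast_mul_le_of_sign_change hpos hneg) hlt (hsum.mul_left _)

theorem stmt19 (a : ℕ → ℝ) (hsum : Summable a)
    (hsum' : Summable (fun i : ℕ => (i : ℝ) * a i)) (ha0 : 0 < a 0)
    (hk : ∃ k : ℕ, 1 ≤ k ∧ (∀ i : ℕ, 1 ≤ i → i < k → 0 ≤ a i) ∧ ∀ i : ℕ, k ≤ i → a i ≤ 0)
    (c : ℝ) (hc : 0 < c)
    (hid : ∑' i : ℕ, (i : ℝ) * a i = -c * ∑' i : ℕ, a i) :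
    0 < ∑' i : ℕ, a i := by
  obtain ⟨k, hk1, hpos, hneg⟩ := hk
  have hpos' : ∀ i < k, 0 ≤ a i := fun i hik =>
    (Nat.eq_zero_or_pos i).elim (fun h => h ▸ ha0.le) (fun hi => hpos i hi hik)
  have hlt := tsum_natCast_mul_lt_of_sign_change hk1 hsum hsum' hpos' hneg ha0
  rw [hid] at hlt
  have hkc : 0 < (k : ℝ) + c := by positivity
  exact pos_of_mul_pos_right (by linarith : 0 < ((k : ℝ) + c) * ∑' i : ℕ, a i) hkc.le
end
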